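/- The function u(x,t) = sin(2·arctan(e^{−t}·tan(x/2)))/sin(x) solves the variable-coefficient transport equation u_t + (sin(x)·u)_x = 0 on the region where sin(x) ≠ 0. -/

import Mathlib

/-! The quantity `w = e^{-t} tan(x/2)` is constant along the characteristics of the field
`sin x ∂ₓ`, because `sin x · (d/dx) tan(x/2) = tan(x/2)`. Hence `v = sin(2 arctan w)` solves
`v_t + sin x · v_x = 0`, and dividing by `sin x` turns this into the conservative equation for
`u = v / sin x`. -/

open Real

theorem Real.hasDerivAt_tan_half {x : ℝ} (hx : sin x ≠ 0) :
    HasDerivAt (fun y => tan (y / 2)) (tan (x / 2) / sin x) x := by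
  have hsin : sin x = 2 * sin (x / 2) * cos (x / 2) := by
    rw [← sin_two_mul, mul_div_cancel₀ x two_ne_zero]
  obtain ⟨hsin_half, hcos⟩ : sin (x / 2) ≠ 0 ∧ cos (x / 2) ≠ 0 := by simpa [hsin] using hx
  refine ((hasDerivAt_tan hcos).comp x ((hasDerivAt_id x).div_const 2)).congr_deriv ?_
  rw [hsin, tan_eq_sin_div_cos]
  field_simp

theorem transport_deriv_comp_exp_neg_mul_tan_half {g : ℝ → ℝ} {x t : ℝ} (hx : sin x ≠ 0)
    (hg : DifferentiableAt ℝ g (exp (-t) * tan (x / 2))) :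
    deriv (fun s => g (exp (-s) * tan (x / 2))) t
      + sin x * deriv (fun y => g (exp (-t) * tan (y / 2))) x = 0 := by
  set w := exp (-t) * tan (x / 2)
  have htime : HasDerivAt (fun s => exp (-s) * tan (x / 2)) (-w) t := by
    simpa [w] using ((hasDerivAt_neg t).exp).mul_const (tan (x / 2))
  have hspace : HasDerivAt (fun y => exp (-t) * tan (y / 2)) (w / sin x) x := by
    simpa [w, mul_div_assoc] using (hasDerivAt_tan_half hx).const_mul (exp (-t))
  have hg_time : HasDerivAt (fun s => g (exp (-s) * tan (x / 2))) (deriv g w * -w) t :=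
    hg.hasDerivAt.comp t htime
  have hg_space : HasDerivAt (fun y => g (exp (-t) * tan (y / 2))) (deriv g w * (w / sin x)) x :=
    hg.hasDerivAt.comp x hspace
  rw [hg_time.deriv, hg_space.deriv]
  field_simp
  ring

theorem deriv_mul_div_cancel_of_continuousAt {f h : ℝ → ℝ} {x : ℝ} (hc : ContinuousAt h x)
    (hx : h x ≠ 0) : deriv (fun y => h y * (f y / h y)) x = deriv f x := by
  refine Filter.EventuallyEq.deriv_eq ?_
  filter_upwards [hc.eventually_ne hx] with y hy
  exact mul_div_cancel₀ (f y) hy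

/-- `u(x,t) = sin(2 arctan(e^{-t} tan(x/2)))/sin(x)` solves
`u_t + (sin(x) u)_x = 0` on `(0, π)`. -/
theorem exact_solution_variable_coefficient_transport :
    ∀ x ∈ Set.Ioo (0 : ℝ) Real.pi, ∀ t : ℝ,
      deriv (fun s => Real.sin (2 * Real.arctan (Real.exp (-s) * Real.tan (x / 2))) / Real.sin x) t
        + deriv (fun y =>
            Real.sin y *
              (Real.sin (2 * Real.arctan (Real.exp (-t) * Real.tan (y / 2))) / Real.sin y)) x
      = 0 := by
  rintro x ⟨hx0, hxpi⟩ t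
  have hx : sin x ≠ 0 := (sin_pos_of_pos_of_lt_pi hx0 hxpi).ne'
  have hg : DifferentiableAt ℝ (fun w => sin (2 * arctan w)) (exp (-t) * tan (x / 2)) :=
    ((differentiableAt_arctan _).const_mul 2).sin
  have htransport := transport_deriv_comp_exp_neg_mul_tan_half hx hg
  rw [deriv_div_const, deriv_mul_div_cancel_of_continuousAt continuous_sin.continuousAt hx]
  field_simp
  linear_combination htransport
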